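/- arXiv:0811.4568 — 2 statements merged into one kernel-verified Lean document; each statement's English description precedes it below -/
import Mathlib

section
/- Let A be a commutative ring equipped with an exhaustive ascending filtration (A_i) with A_i = 0 for i < 0, such that the associated graded ring gr(A) is an integral domain. Then for every nonzero x in A, the associated graded ideal of the principal ideal (x) equals the principal ideal generated by the top symbol gr(x), i.e. gr((x)) = (gr(x)). -/
/-- Let `A` be a commutative ring with an exhaustive ascending filtration `(Aᵢ)_{i ∈ ℤ}`,
`Aᵢ = 0` for `i < 0`, whose associated graded ring `gr(A)` is an integral domain (expressed
elementwise as for products of homogeneous symbols).  Let `x ≠ 0` have degree `d`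
(`x ∈ A_d \ A_{d-1}`).  Then `gr((x)) = (gr(x))` as homogeneous ideals of `gr(A)`;
elementwise, in each degree `n`:
`((x) ∩ A_n + A_{n-1})/A_{n-1} = (x·A_{n-d} + A_{n-1})/A_{n-1}`, i.e. every element of
`(x) ∩ A_n` is congruent modulo `A_{n-1}` to `x·z` for some `z ∈ A_{n-d}`, and conversely
every `x·z` with `z ∈ A_{n-d}` lies in `(x) ∩ A_n`. -/
theorem graded_of_principal_ideal_eq_principal_of_symbol
    (A : Type*) [CommRing A] (F : ℤ → AddSubgroup A)
    (hmono : Monotone F)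
    (hexh : ∀ a : A, ∃ i, a ∈ F i)
    (hneg : ∀ i < 0, F i = ⊥)
    (hone : (1 : A) ∈ F 0)
    (hmul : ∀ i j : ℤ, ∀ a ∈ F i, ∀ b ∈ F j, a * b ∈ F (i + j))
    (hgrdom : ∀ (i j : ℤ) (a b : A), a ∈ F i → b ∈ F j →
      a * b ∈ F (i + j - 1) → a ∈ F (i - 1) ∨ b ∈ F (j - 1))
    (x : A) (hx : x ≠ 0) (d : ℤ) (hxd : x ∈ F d) (hxd' : x ∉ F (d - 1)) :
    (∀ n : ℤ, ∀ y ∈ Ideal.span ({x} : Set A), y ∈ F n →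
      ∃ z ∈ F (n - d), y - x * z ∈ F (n - 1)) ∧
    (∀ n : ℤ, ∀ z ∈ F (n - d), x * z ∈ Ideal.span ({x} : Set A) ∧ x * z ∈ F n) := by
  constructor
  · intro n y hy hyn
    obtain ⟨c, hc⟩ := Ideal.mem_span_singleton'.mp hy
    have hxc : x * c ∈ F n := by rw [mul_comm, hc]; exact hyn
    have key : ∀ k : ℕ, ∀ e : ℤ, e ≤ n - d + k → c ∈ F e → c ∈ F (n - d) := by
      intro k
      induction k with
      | zero =>
        intro e he hce
        simpa using hmono (by simpa using he) hce
      | succ k ih =>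
        intro e he hce
        by_cases h : e ≤ n - d + k
        · exact ih e h hce
        · push_neg at h
          have hn : n ≤ d + e - 1 := by omega
          have hxc' : x * c ∈ F (d + e - 1) := hmono hn hxc
          rcases hgrdom d e x c hxd hce hxc' with h1 | h2
          · exact absurd h1 hxd'
          · exact ih (e - 1) (by omega) h2
    obtain ⟨e, he⟩ := hexh c
    have hc' : c ∈ F (n - d) := by
      rcases le_or_gt e (n - d) with h | h
      · exact hmono h he
      · exact key (e - (n - d)).toNat e (by omega) he
    refine ⟨c, hc', ?_⟩
    rw [mul_comm, hc, sub_self]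
    exact (F (n - 1)).zero_mem
  · intro n z hz
    refine ⟨Ideal.mem_span_singleton'.mpr ⟨z, mul_comm z x⟩, ?_⟩
    have := hmul d (n - d) x hxd z hz
    simpa using this
end

section
/- Let A be a commutative ring with an exhaustive ascending filtration (A_i), A_i = 0 for i < 0, such that gr(A) is an integral domain. If x ∈ A is nonzero and its top symbol gr(x) is a prime element of gr(A), then x is a prime element of A. -/
/-!
Lift divisibility from the symbols. If `x ∣ ab` with `a, b` of degrees `m, n`, primality of
`gr x` yields `c` with `a - xc` (or `b - xc`) of lower degree; `x ∣ (a - xc) b` and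
`x ∣ a - xc ↔ x ∣ a`, so we may replace `a` by `a - xc`. Since the filtration vanishes in
negative degrees, this descent on `m + n` terminates.
-/

section FilteredRing

variable {A : Type*} [CommRing A] {F : ℤ → AddSubgroup A}

/-- `a` has degree `m`: `gr a = a + F (m - 1)` is a nonzero element of `F m / F (m - 1)`. -/
def HasDegree (F : ℤ → AddSubgroup A) (a : A) (m : ℤ) : Prop :=
  a ∈ F m ∧ a ∉ F (m - 1)

namespace HasDegree

variable {a b : A} {m n : ℤ}

theorem ne_zero (ha : HasDegree F a m) : a ≠ 0 := by
  rintro rfl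
  exact ha.2 (zero_mem _)

theorem le_of_mem (hmono : Monotone F) (ha : HasDegree F a m) {k : ℤ} (hk : a ∈ F k) :
    m ≤ k := by
  by_contra! h
  exact ha.2 (hmono (by omega) hk)

theorem unique (hmono : Monotone F) (ha : HasDegree F a m) (ha' : HasDegree F a n) : m = n :=
  le_antisymm (ha.le_of_mem hmono ha'.1) (ha'.le_of_mem hmono ha.1)

theorem mul (hmul : ∀ i j : ℤ, ∀ a ∈ F i, ∀ b ∈ F j, a * b ∈ F (i + j))
    (hgrdom : ∀ (i j : ℤ) (a b : A), a ∈ F i → b ∈ F j →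
      a * b ∈ F (i + j - 1) → a ∈ F (i - 1) ∨ b ∈ F (j - 1))
    (ha : HasDegree F a m) (hb : HasDegree F b n) : HasDegree F (a * b) (m + n) :=
  ⟨hmul m n a ha.1 b hb.1, fun h => (hgrdom m n a b ha.1 hb.1 h).elim ha.2 hb.2⟩

end HasDegree

theorem eq_zero_of_mem_of_neg (hneg : ∀ i < 0, F i = ⊥) {a : A} {i : ℤ} (ha : a ∈ F i)
    (hi : i < 0) : a = 0 := by
  rwa [hneg i hi, AddSubgroup.mem_bot] at ha

theorem exists_hasDegree (hexh : ∀ a : A, ∃ i, a ∈ F i) (hneg : ∀ i < 0, F i = ⊥)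
    {a : A} (ha : a ≠ 0) : ∃ m, HasDegree F a m := by
  have hbdd : ∀ i, a ∈ F i → 0 ≤ i := fun i hi => by
    by_contra! h
    exact ha (eq_zero_of_mem_of_neg hneg hi h)
  obtain ⟨m, hm, hleast⟩ := Int.exists_least_of_bdd ⟨0, hbdd⟩ (hexh a)
  exact ⟨m, hm, fun h => by linarith [hleast _ h]⟩

structure IsDomainFiltration (F : ℤ → AddSubgroup A) : Prop where
  mono : Monotone F
  exhaustive : ∀ a : A, ∃ i, a ∈ F i
  eq_bot_of_neg : ∀ i < 0, F i = ⊥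
  mul_mem : ∀ i j : ℤ, ∀ a ∈ F i, ∀ b ∈ F j, a * b ∈ F (i + j)
  gr_domain : ∀ (i j : ℤ) (a b : A), a ∈ F i → b ∈ F j →
    a * b ∈ F (i + j - 1) → a ∈ F (i - 1) ∨ b ∈ F (j - 1)

/-- For `a` of degree `m`, this says that `gr x` divides `gr a` in `gr(A)`, where `d` is the
degree of `x`. -/
def SymbolDvd (F : ℤ → AddSubgroup A) (x : A) (d : ℤ) (a : A) (m : ℤ) : Prop :=
  ∃ c ∈ F (m - d), a - x * c ∈ F (m - 1)

namespace IsDomainFiltration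

variable {x a : A} {d m : ℤ}

theorem hasDegree_one [Nontrivial A] (hF : IsDomainFiltration F) : HasDegree F (1 : A) 0 := by
  obtain ⟨m, hm⟩ := exists_hasDegree hF.exhaustive hF.eq_bot_of_neg (one_ne_zero (α := A))
  have hmm : HasDegree F (1 : A) (m + m) := by
    simpa only [one_mul] using hm.mul hF.mul_mem hF.gr_domain hm
  rwa [show m = 0 by linarith [hm.unique hF.mono hmm]] at hm

theorem symbolDvd_of_dvd (hF : IsDomainFiltration F) (hx : HasDegree F x d)
    (ha : HasDegree F a m) (hdvd : x ∣ a) : SymbolDvd F x d a m := by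
  obtain ⟨c, rfl⟩ := hdvd
  obtain ⟨e, hc⟩ := exists_hasDegree hF.exhaustive hF.eq_bot_of_neg (right_ne_zero_of_mul ha.ne_zero)
  have hde : d + e = m := (hx.mul hF.mul_mem hF.gr_domain hc).unique hF.mono ha
  exact ⟨c, by rw [← hde, add_sub_cancel_left]; exact hc.1, by rw [sub_self]; exact zero_mem _⟩

theorem not_isUnit (hF : IsDomainFiltration F) (hx : HasDegree F x d)
    (hnotunit : ¬ ∃ b ∈ F (0 - d), x * b - 1 ∈ F (-1 : ℤ)) : ¬ IsUnit x := by
  have := nontrivial_of_ne x 0 hx.ne_zero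
  intro hunit
  obtain ⟨u, hxu⟩ := hunit.exists_right_inv
  obtain ⟨e, hu⟩ := exists_hasDegree hF.exhaustive hF.eq_bot_of_neg (right_ne_zero_of_mul_eq_one hxu)
  have hde : d + e = 0 := by
    have hxu_deg := hx.mul hF.mul_mem hF.gr_domain hu
    rw [hxu] at hxu_deg
    exact hxu_deg.unique hF.mono hF.hasDegree_one
  exact hnotunit ⟨u, by rw [show 0 - d = e by omega]; exact hu.1,
    by rw [hxu, sub_self]; exact zero_mem _⟩

theorem dvd_or_dvd_of_dvd_mul (hF : IsDomainFiltration F) (hx : HasDegree F x d)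
    (hprime : ∀ (m n : ℤ) (a b : A), HasDegree F a m → HasDegree F b n →
      SymbolDvd F x d (a * b) (m + n) → SymbolDvd F x d a m ∨ SymbolDvd F x d b n)
    {a b : A} (hab : x ∣ a * b) : x ∣ a ∨ x ∣ b := by
  suffices descent : ∀ k : ℕ, ∀ (a b : A) (i j : ℤ), a ∈ F i → b ∈ F j → i + j < k →
      x ∣ a * b → x ∣ a ∨ x ∣ b by
    obtain ⟨i, hi⟩ := hF.exhaustive a
    obtain ⟨j, hj⟩ := hF.exhaustive b
    exact descent (i + j + 1).toNat a b i j hi hj (by omega) hab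
  intro k
  induction k with
  | zero =>
    intro a b i j ha hb hij _
    rcases lt_or_ge i 0 with hi | hi
    · exact .inl (by rw [eq_zero_of_mem_of_neg hF.eq_bot_of_neg ha hi]; exact dvd_zero x)
    · exact .inr (by rw [eq_zero_of_mem_of_neg hF.eq_bot_of_neg hb (by omega)]; exact dvd_zero x)
  | succ k ih =>
    intro a b i j ha hb hij hab
    rcases eq_or_ne a 0 with rfl | ha0
    · exact .inl (dvd_zero x)
    rcases eq_or_ne b 0 with rfl | hb0
    · exact .inr (dvd_zero x)
    obtain ⟨m, ham⟩ := exists_hasDegree hF.exhaustive hF.eq_bot_of_neg ha0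
    obtain ⟨n, hbn⟩ := exists_hasDegree hF.exhaustive hF.eq_bot_of_neg hb0
    have hmi := ham.le_of_mem hF.mono ha
    have hnj := hbn.le_of_mem hF.mono hb
    have hsymb := hF.symbolDvd_of_dvd hx (ham.mul hF.mul_mem hF.gr_domain hbn) hab
    rcases hprime m n a b ham hbn hsymb with ⟨c, -, hc⟩ | ⟨c, -, hc⟩
    · have hdvd : x ∣ (a - x * c) * b := by
        rw [sub_mul, mul_assoc]; exact dvd_sub hab (dvd_mul_right _ _)
      exact (ih _ b (m - 1) j hc hb (by omega) hdvd).imp_left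
        (dvd_sub_left (dvd_mul_right x c)).mp
    · have hdvd : x ∣ a * (b - x * c) := by
        rw [mul_sub, mul_left_comm]; exact dvd_sub hab (dvd_mul_right _ _)
      exact (ih a _ i (n - 1) ha hc (by omega) hdvd).imp_right
        (dvd_sub_left (dvd_mul_right x c)).mp

end IsDomainFiltration

end FilteredRing

theorem prime_of_symbol_prime_general
    (A : Type*) [CommRing A] (F : ℤ → AddSubgroup A)
    (hmono : Monotone F)
    (hexh : ∀ a : A, ∃ i, a ∈ F i)
    (hneg : ∀ i < 0, F i = ⊥)
    (hmul : ∀ i j : ℤ, ∀ a ∈ F i, ∀ b ∈ F j, a * b ∈ F (i + j))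
    (hgrdom : ∀ (i j : ℤ) (a b : A), a ∈ F i → b ∈ F j →
      a * b ∈ F (i + j - 1) → a ∈ F (i - 1) ∨ b ∈ F (j - 1))
    (x : A) (d : ℤ) (hxd : x ∈ F d) (hxd' : x ∉ F (d - 1))
    (hnotunit : ¬ ∃ b ∈ F (0 - d), x * b - 1 ∈ F (-1 : ℤ))
    (hprime : ∀ (m n : ℤ) (a b : A), a ∈ F m → a ∉ F (m - 1) → b ∈ F n → b ∉ F (n - 1) →
      (∃ c ∈ F (m + n - d), a * b - x * c ∈ F (m + n - 1)) →
      (∃ c ∈ F (m - d), a - x * c ∈ F (m - 1)) ∨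
      (∃ c ∈ F (n - d), b - x * c ∈ F (n - 1))) :
    Prime x := by
  have hF : IsDomainFiltration F := ⟨hmono, hexh, hneg, hmul, hgrdom⟩
  have hx : HasDegree F x d := ⟨hxd, hxd'⟩
  exact ⟨hx.ne_zero, hF.not_isUnit hx hnotunit, fun a b hab =>
    hF.dvd_or_dvd_of_dvd_mul hx (fun m n a b ha hb => hprime m n a b ha.1 ha.2 hb.1 hb.2) hab⟩

/-- Let `A` be a commutative ring with an exhaustive ascending filtration `(Aᵢ)_{i ∈ ℤ}`,
`Aᵢ = 0` for `i < 0`, such that the associated graded ring `gr(A)` is a domain (expressed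
elementwise).  Let `x ≠ 0` have degree `d` and suppose the top symbol `gr(x)` is a prime
element of `gr(A)`.  Since `gr(A)` is a graded domain and `gr(x)` is homogeneous, primality
of `gr(x)` is expressed on homogeneous symbols:  `gr(x)` is not a unit (no `b ∈ A_{-d}`
with `xb ≡ 1 mod A_{-1}`), and whenever `gr(x)` divides the product of the symbols of
`a ∈ A_m \ A_{m-1}` and `b ∈ A_n \ A_{n-1}` it divides one of them, where
"`gr(x)` divides `gr(a)`" means `∃ c ∈ A_{m-d}, a - xc ∈ A_{m-1}`.
Then `x` is a prime element of `A`. -/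
theorem prime_of_symbol_prime
    (A : Type*) [CommRing A] (F : ℤ → AddSubgroup A)
    (hmono : Monotone F)
    (hexh : ∀ a : A, ∃ i, a ∈ F i)
    (hneg : ∀ i < 0, F i = ⊥)
    (hone : (1 : A) ∈ F 0)
    (hmul : ∀ i j : ℤ, ∀ a ∈ F i, ∀ b ∈ F j, a * b ∈ F (i + j))
    (hgrdom : ∀ (i j : ℤ) (a b : A), a ∈ F i → b ∈ F j →
      a * b ∈ F (i + j - 1) → a ∈ F (i - 1) ∨ b ∈ F (j - 1))
    (x : A) (hx : x ≠ 0) (d : ℤ) (hxd : x ∈ F d) (hxd' : x ∉ F (d - 1))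
    (hnotunit : ¬ ∃ b ∈ F (0 - d), x * b - 1 ∈ F (-1 : ℤ))
    (hprime : ∀ (m n : ℤ) (a b : A), a ∈ F m → a ∉ F (m - 1) → b ∈ F n → b ∉ F (n - 1) →
      (∃ c ∈ F (m + n - d), a * b - x * c ∈ F (m + n - 1)) →
      (∃ c ∈ F (m - d), a - x * c ∈ F (m - 1)) ∨
      (∃ c ∈ F (n - d), b - x * c ∈ F (n - 1))) :
    Prime x :=
  prime_of_symbol_prime_general A F hmono hexh hneg hmul hgrdom x d hxd hxd' hnotunit hprime
end
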